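/- arXiv:2006.08501 — 5 statements merged into one kernel-verified Lean document; each statement's English description precedes it below -/
import Mathlib

section
/- For every n ≥ 1, the identity map id : X_n → X_n is pure in the cone CP(X_n, X_n) of completely positive linear maps: whenever ϑ, ω : X_n → X_n are completely positive linear maps with ϑ + ω = id, there exists s ∈ [0,1] such that ϑ = s·id and ω = (1−s)·id. (This is the content of the theorem that the identity map on the free-group operator system S_n is pure, transported through the complete order isomorphism S_n^d ≅ X_n.) -/
open scoped ComplexOrder

/-- The `(m·|ι|) × (m·|ι|)` matrix obtained from an `m × m` array of `ι × ι` matrices. -/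
def blockMat {ι : Type} {m : ℕ} (x : Fin m → Fin m → Matrix ι ι ℂ) :
    Matrix (Fin m × ι) (Fin m × ι) ℂ :=
  Matrix.of fun p q => x p.1 q.1 p.2 q.2

/-- Complete positivity for a linear map between matrix operator systems
(given as subspaces of matrix algebras): every positive semidefinite `m × m` block
matrix with entries in `S` is sent (entrywise) to a positive semidefinite block matrix. -/
def IsCP {ι κ : Type} [Fintype ι] [Fintype κ]
    (S : Submodule ℂ (Matrix ι ι ℂ)) (T : Submodule ℂ (Matrix κ κ ℂ))
    (φ : S →ₗ[ℂ] T) : Prop :=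
  ∀ (m : ℕ) (x : Fin m → Fin m → S),
    (blockMat fun i j => (x i j : Matrix ι ι ℂ)).PosSemidef →
    (blockMat fun i j => (φ (x i j) : Matrix κ κ ℂ)).PosSemidef

/-- The block-diagonal matrix `⊕ₖ [[α, βₖ],[γₖ, α]]` in `M_{2n}(ℂ)`. -/
def xMat (n : ℕ) (α : ℂ) (β γ : Fin n → ℂ) :
    Matrix (Fin n × Fin 2) (Fin n × Fin 2) ℂ :=
  Matrix.of fun p q => if p.1 = q.1 then !![α, β p.1; γ p.1, α] p.2 q.2 else 0

/-- The matrix operator system `Xₙ = { ⊕ₖ [[α, βₖ],[γₖ, α]] } ⊆ M_{2n}(ℂ)`,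
completely order isomorphic to the dual of the free-group operator system `Sₙ`. -/
noncomputable def XSys (n : ℕ) : Submodule ℂ (Matrix (Fin n × Fin 2) (Fin n × Fin 2) ℂ) :=
  Submodule.span ℂ {x | ∃ α β γ, x = xMat n α β γ}

/-!
For `‖uₖ‖ = 1` the element `E u = torusElem n u = ⊕ₖ [[1, uₖ], [conj uₖ, 1]]` of `Xₙ` is positive
and spans an extreme ray of its positive cone: if `0 ≤ P ≤ E u` in `Xₙ`, the off-diagonal entries
of `P` and `E u - P` are bounded by their scalar diagonals `a` and `1 - a`, and equality in the
triangle inequality `1 = ‖uₖ‖ ≤ ‖βₖ‖ + ‖uₖ - βₖ‖` forces `P = a • E u`. Hence every `E u` is an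
eigenvector of `ϑ`, because `ω = id - ϑ` is positive too. Moving one coordinate `uⱼ` through
`±1, ±i` and using `E(1) + E(-1) = E(i) + E(-i)` shows that all these eigenvalues coincide, and
the `E u` span `Xₙ`.
-/

open Complex ComplexConjugate Matrix

theorem eq_smul_of_norm_le_of_norm_sub_le {E : Type*} [NormedAddCommGroup E] [NormedSpace ℝ E]
    [StrictConvexSpace ℝ E] {x y : E} {a : ℝ} (hx : ‖x‖ ≤ a) (hyx : ‖y - x‖ ≤ 1 - a)
    (hy : ‖y‖ = 1) : x = a • y := by
  have htri : ‖y‖ ≤ ‖x‖ + ‖y - x‖ := by simpa using norm_add_le x (y - x)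
  have hray : SameRay ℝ x (y - x) :=
    sameRay_iff_norm_add.2 (by simp only [add_sub_cancel]; linarith)
  have h := hray.norm_smul_eq
  rw [show ‖x‖ = a by linarith, show ‖y - x‖ = 1 - a by linarith] at h
  linear_combination (norm := module) -h

theorem LinearMap.eq_smul_of_forall_circle_eigen {V : Type*} [AddCommGroup V] [Module ℂ V]
    (f : V →ₗ[ℂ] V) {e x y : V} (hind : LinearIndependent ℂ ![e, x, y]) {s : ℂ}
    (hcircle : ∀ t : ℂ, ‖t‖ = 1 → ∃ c : ℂ,
      f (e + t • x + conj t • y) = c • (e + t • x + conj t • y))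
    (hs : f (e + x + y) = s • (e + x + y)) :
    f x = s • x ∧ f y = s • y := by
  obtain ⟨c₂, h₂⟩ := hcircle (-1) (by simp)
  obtain ⟨c₃, h₃⟩ := hcircle I (by simp)
  obtain ⟨c₄, h₄⟩ := hcircle (-I) (by simp)
  simp only [map_add, map_smul, map_neg, map_one, conj_I, neg_neg] at hs h₂ h₃ h₄
  have hzero : (s + c₂ - c₃ - c₄) • e + (s - c₂ - I * c₃ + I * c₄) • x
      + (s - c₂ + I * c₃ - I * c₄) • y = 0 := by
    -- the circle points `t = ±1` and `t = ±I` have the same sum `2 • e`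
    linear_combination (norm := module) h₃ + h₄ - hs - h₂
  have hcoef := Fintype.linearIndependent_iff.1 hind
    ![s + c₂ - c₃ - c₄, s - c₂ - I * c₃ + I * c₄, s - c₂ + I * c₃ - I * c₄]
    (by simpa [Fin.sum_univ_three] using hzero)
  have h0 : s + c₂ - c₃ - c₄ = 0 := hcoef 0
  have h1 : s - c₂ - I * c₃ + I * c₄ = 0 := hcoef 1
  have h2 : s - c₂ + I * c₃ - I * c₄ = 0 := hcoef 2
  have hc₂ : c₂ = s := by linear_combination -(h1 + h2) / 2
  have hc₃ : c₃ = s := by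
    linear_combination I / 4 * (h1 - h2) - (h0 + (h1 + h2) / 2) / 2 + (c₃ - c₄) / 2 * I_sq
  have hc₄ : c₄ = s := by
    linear_combination -I / 4 * (h1 - h2) - (h0 + (h1 + h2) / 2) / 2 - (c₃ - c₄) / 2 * I_sq
  subst c₂ c₃ c₄
  constructor
  · linear_combination (norm := module) (1/4 : ℂ) • (hs - h₂) - (I/4) • (h₃ - h₄)
      + I_sq • ((1/2 : ℂ) • (f x - f y - s • (x - y)))
  · linear_combination (norm := module) (1/4 : ℂ) • (hs - h₂) + (I/4) • (h₃ - h₄)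
      - I_sq • ((1/2 : ℂ) • (f x - f y - s • (x - y)))

theorem Matrix.PosSemidef.fin_two_const_diag {a b c : ℂ} (h : (!![a, b; c, a]).PosSemidef) :
    (a.re : ℂ) = a ∧ ‖b‖ ≤ a.re ∧ c = conj b := by
  have hc : c = conj b := by simpa using (h.isHermitian.apply 1 0).symm
  have ha := Complex.nonneg_iff.1 (h.diag_nonneg (i := 0))
  simp only [of_apply, cons_val', cons_val_zero, empty_val', cons_val_fin_one] at ha
  have hreal : (a.re : ℂ) = a := Complex.ext rfl (by simp [ha.2])
  have hdet := h.det_nonneg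
  rw [det_fin_two_of, hc, ← hreal, mul_conj, ← Complex.ofReal_mul, Complex.normSq_eq_norm_sq,
    ← Complex.ofReal_sub, Complex.zero_le_real] at hdet
  exact ⟨hreal, abs_le_of_sq_le_sq' (by linarith) ha.1 |>.2, hc⟩

theorem blockMat_fin_one_posSemidef_iff {ι : Type} [Fintype ι] {M : Matrix ι ι ℂ} :
    (blockMat (m := 1) fun _ _ => M).PosSemidef ↔ M.PosSemidef := by
  rw [← posSemidef_submatrix_equiv (Equiv.uniqueProd ι (Fin 1))]
  rfl

theorem IsCP.posSemidef_apply {ι κ : Type} [Fintype ι] [Fintype κ]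
    {S : Submodule ℂ (Matrix ι ι ℂ)} {T : Submodule ℂ (Matrix κ κ ℂ)} {φ : S →ₗ[ℂ] T}
    (hφ : IsCP S T φ) {x : S} (hx : (x : Matrix ι ι ℂ).PosSemidef) :
    (φ x : Matrix κ κ ℂ).PosSemidef :=
  blockMat_fin_one_posSemidef_iff.1 (hφ 1 (fun _ _ => x) (blockMat_fin_one_posSemidef_iff.2 hx))

noncomputable section

namespace XSys

variable {n : ℕ}

def xMatLinear (n : ℕ) :
    (ℂ × (Fin n → ℂ) × (Fin n → ℂ)) →ₗ[ℂ] Matrix (Fin n × Fin 2) (Fin n × Fin 2) ℂ where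
  toFun c := xMat n c.1 c.2.1 c.2.2
  map_add' c d := by
    ext ⟨k, i⟩ ⟨l, j⟩
    by_cases h : k = l <;> fin_cases i <;> fin_cases j <;> simp [xMat, h]
  map_smul' c d := by
    ext ⟨k, i⟩ ⟨l, j⟩
    by_cases h : k = l <;> fin_cases i <;> fin_cases j <;> simp [xMat, h]

theorem xMat_mem (α : ℂ) (β γ : Fin n → ℂ) : xMat n α β γ ∈ XSys n :=
  Submodule.subset_span ⟨α, β, γ, rfl⟩

def toXSys (n : ℕ) : (ℂ × (Fin n → ℂ) × (Fin n → ℂ)) →ₗ[ℂ] XSys n :=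
  (xMatLinear n).codRestrict (XSys n) fun c => xMat_mem c.1 c.2.1 c.2.2

@[simp] theorem coe_toXSys (c : ℂ × (Fin n → ℂ) × (Fin n → ℂ)) :
    (toXSys n c : Matrix (Fin n × Fin 2) (Fin n × Fin 2) ℂ) = xMat n c.1 c.2.1 c.2.2 := rfl

theorem toXSys_surjective (n : ℕ) : Function.Surjective (toXSys n) := by
  rintro ⟨x, hx⟩
  have hle : XSys n ≤ LinearMap.range (xMatLinear n) :=
    Submodule.span_le.2 fun _ ⟨α, β, γ, h⟩ => ⟨(α, β, γ), h.symm⟩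
  obtain ⟨c, rfl⟩ := hle hx
  exact ⟨c, rfl⟩

theorem xMat_submatrix (α : ℂ) (β γ : Fin n → ℂ) (k : Fin n) :
    (xMat n α β γ).submatrix (fun i => (k, i)) (fun i => (k, i)) = !![α, β k; γ k, α] := by
  ext i j
  simp [xMat]

def torusElem (n : ℕ) (u : Fin n → ℂ) : XSys n := toXSys n (1, u, star u)

theorem posSemidef_torusElem {u : Fin n → ℂ} (hu : ∀ k, ‖u k‖ = 1) :
    (torusElem n u : Matrix (Fin n × Fin 2) (Fin n × Fin 2) ℂ).PosSemidef := by
  let A : Matrix (Fin n) (Fin n × Fin 2) ℂ :=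
    .of fun m p => if m = p.1 then ![1, u m] p.2 else 0
  convert posSemidef_conjTranspose_mul_self A
  ext ⟨k, i⟩ ⟨l, j⟩
  have hu' : conj (u k) * u k = 1 := by
    rw [RCLike.conj_mul, hu]; simp
  rcases eq_or_ne k l with rfl | h
  · fin_cases i <;> fin_cases j <;> simp [torusElem, xMat, A, mul_apply, hu']
  · fin_cases i <;> fin_cases j <;> simp [torusElem, xMat, A, mul_apply, h, h.symm]

theorem xMat_block_of_posSemidef {α : ℂ} {β γ : Fin n → ℂ} (h : (xMat n α β γ).PosSemidef)
    (k : Fin n) : (α.re : ℂ) = α ∧ ‖β k‖ ≤ α.re ∧ γ k = conj (β k) :=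
  (xMat_submatrix α β γ k ▸ h.submatrix fun i => (k, i)).fin_two_const_diag

theorem exists_eq_smul_torusElem_of_posSemidef [NeZero n] {u : Fin n → ℂ} (hu : ∀ k, ‖u k‖ = 1)
    {P : XSys n}
    (hP : (P : Matrix (Fin n × Fin 2) (Fin n × Fin 2) ℂ).PosSemidef)
    (hEP : ((torusElem n u - P : XSys n) : Matrix (Fin n × Fin 2) (Fin n × Fin 2) ℂ).PosSemidef) :
    ∃ a : ℝ, 0 ≤ a ∧ a ≤ 1 ∧ P = (a : ℂ) • torusElem n u := by
  obtain ⟨⟨α, β, γ⟩, rfl⟩ := toXSys_surjective n P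
  rw [torusElem, ← map_sub, coe_toXSys] at hEP
  rw [coe_toXSys] at hP
  have hα := (xMat_block_of_posSemidef hP 0).1
  have hβ k : ‖β k‖ ≤ α.re := (xMat_block_of_posSemidef hP k).2.1
  have hγ k : γ k = conj (β k) := (xMat_block_of_posSemidef hP k).2.2
  have hβu k : ‖u k - β k‖ ≤ 1 - α.re := by simpa using (xMat_block_of_posSemidef hEP k).2.1
  have hβ_eq k : β k = α.re * u k := by
    rw [← Complex.real_smul]
    exact eq_smul_of_norm_le_of_norm_sub_le (hβ k) (hβu k) (hu k)
  refine ⟨α.re, (norm_nonneg _).trans (hβ 0), by linarith [(norm_nonneg _).trans (hβu 0)], ?_⟩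
  rw [torusElem, ← map_smul]
  congr 1
  refine Prod.ext (by simp [hα]) (Prod.ext (funext hβ_eq) (funext fun k => ?_))
  simp [hγ, hβ_eq]

theorem torusElem_update_one (j : Fin n) (t : ℂ) :
    torusElem n (Function.update 1 j t) = torusElem n (Function.update 1 j 0)
      + t • toXSys n (0, Pi.single j 1, 0) + conj t • toXSys n (0, 0, Pi.single j 1) := by
  simp only [torusElem, ← map_smul, ← map_add]
  congr 1
  refine Prod.ext (by simp) (Prod.ext (funext fun k => ?_) (funext fun k => ?_)) <;>
    rcases eq_or_ne k j with rfl | h <;> simp [*]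

theorem linearIndependent_torusElem_update (j : Fin n) :
    LinearIndependent ℂ ![torusElem n (Function.update 1 j 0), toXSys n (0, Pi.single j 1, 0),
      toXSys n (0, 0, Pi.single j 1)] := by
  refine Fintype.linearIndependent_iff.2 fun g hg => ?_
  have hentry (p q : Fin n × Fin 2) := congrArg (fun P : XSys n => (P : Matrix _ _ ℂ) p q) hg
  intro i
  fin_cases i
  · simpa [Fin.sum_univ_three, torusElem, xMat] using hentry (j, 0) (j, 0)
  · simpa [Fin.sum_univ_three, torusElem, xMat] using hentry (j, 0) (j, 1)
  · simpa [Fin.sum_univ_three, torusElem, xMat] using hentry (j, 1) (j, 0)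

theorem eq_smul_id_of_forall_torusElem_eigen (f : XSys n →ₗ[ℂ] XSys n) {s : ℂ}
    (hf : ∀ u : Fin n → ℂ, (∀ k, ‖u k‖ = 1) → ∃ c : ℂ, f (torusElem n u) = c • torusElem n u)
    (hs : f (torusElem n 1) = s • torusElem n 1) : f = s • LinearMap.id := by
  have hgen j : f (toXSys n (0, Pi.single j 1, 0)) = s • toXSys n (0, Pi.single j 1, 0) ∧
      f (toXSys n (0, 0, Pi.single j 1)) = s • toXSys n (0, 0, Pi.single j 1) := by
    refine f.eq_smul_of_forall_circle_eigen (linearIndependent_torusElem_update j)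
      (fun t ht => ?_) ?_
    · rw [← torusElem_update_one]
      refine hf _ fun k => ?_
      rcases eq_or_ne k j with rfl | h <;> simp [*]
    · have h1 := torusElem_update_one j 1
      rw [Function.update_eq_self_iff.2 (Pi.one_apply j).symm, one_smul, map_one, one_smul] at h1
      rwa [← h1]
  refine (LinearMap.cancel_right (toXSys_surjective n)).1 ?_
  refine LinearMap.prod_ext (LinearMap.ext_ring ?_) (LinearMap.prod_ext
    (LinearMap.pi_ext' fun j => LinearMap.ext_ring ?_)
    (LinearMap.pi_ext' fun j => LinearMap.ext_ring ?_))
  · have hdecomp : toXSys n (1, 0) = torusElem n 1 - ∑ j, toXSys n (0, Pi.single j 1, 0)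
        - ∑ j, toXSys n (0, 0, Pi.single j 1) := by
      simp only [torusElem, ← map_sum, ← map_sub]
      congr 1
      refine Prod.ext ?_ (Prod.ext ?_ ?_) <;>
        simp [Prod.fst_sum, Prod.snd_sum, Finset.univ_sum_single, ← Pi.one_def]
    simp only [LinearMap.coe_comp, Function.comp_apply, LinearMap.inl_apply, LinearMap.smul_apply,
      LinearMap.id_apply, hdecomp, map_sub, map_sum, hs, fun j => (hgen j).1, fun j => (hgen j).2]
  · simpa using (hgen j).1
  · simpa using (hgen j).2

end XSys

end

open XSys in
/-- The identity map on `Xₙ` is pure in the cone `CP(Xₙ, Xₙ)`, for every `n ≥ 1`. -/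
theorem identity_map_on_Xn_is_pure (n : ℕ) (hn : 1 ≤ n)
    (ϑ ω : XSys n →ₗ[ℂ] XSys n)
    (hϑ : IsCP (XSys n) (XSys n) ϑ) (hω : IsCP (XSys n) (XSys n) ω)
    (hsum : ϑ + ω = LinearMap.id) :
    ∃ s : ℝ, 0 ≤ s ∧ s ≤ 1 ∧
      ϑ = (s : ℂ) • (LinearMap.id : XSys n →ₗ[ℂ] XSys n) ∧
      ω = ((1 - s : ℝ) : ℂ) • (LinearMap.id : XSys n →ₗ[ℂ] XSys n) := by
  have : NeZero n := ⟨by omega⟩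
  have hω_eq : ω = LinearMap.id - ϑ := by rw [← hsum]; abel
  have heigen (u : Fin n → ℂ) (hu : ∀ k, ‖u k‖ = 1) :
      ∃ a : ℝ, 0 ≤ a ∧ a ≤ 1 ∧ ϑ (torusElem n u) = (a : ℂ) • torusElem n u := by
    have hE := posSemidef_torusElem hu
    refine exists_eq_smul_torusElem_of_posSemidef hu (hϑ.posSemidef_apply hE) ?_
    simpa [hω_eq] using hω.posSemidef_apply hE
  obtain ⟨s, hs0, hs1, hs⟩ := heigen 1 (by simp)
  have hϑ_eq : ϑ = (s : ℂ) • LinearMap.id := by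
    refine eq_smul_id_of_forall_torusElem_eigen ϑ (fun u hu => ?_) hs
    obtain ⟨a, -, -, ha⟩ := heigen u hu
    exact ⟨a, ha⟩
  refine ⟨s, hs0, hs1, hϑ_eq, ?_⟩
  rw [hω_eq, hϑ_eq, Complex.ofReal_sub, Complex.ofReal_one]
  module
end

section
/- Let K and H be complex Hilbert spaces, let R ⊆ T be operator systems on K, and let φ : R → B(H) be a pure completely positive linear map. Let C denote the set of all completely positive linear maps Φ : T → B(H) with Φ(x) = φ(x) for all x ∈ R. Then C is convex, and every extreme point Φ of C is a pure completely positive linear map in CP(T, B(H)). (This is the proposition on extreme points of the set of extensions, in the case where the injective operator system is B(H).) -/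
open scoped ComplexOrder InnerProductSpace

/-- An `m × m` matrix of operators on a Hilbert space `H` is positive if the
corresponding operator on the direct sum `H^{⊕m}` is positive, i.e. its quadratic
form is nonnegative. -/
def OpMatPos {H : Type*} [NormedAddCommGroup H] [InnerProductSpace ℂ H] {m : ℕ}
    (x : Fin m → Fin m → (H →L[ℂ] H)) : Prop :=
  ∀ v : Fin m → H, 0 ≤ ∑ i, ∑ j, ⟪x i j (v j), v i⟫_ℂ

/-- Complete positivity for a linear map from an operator system `R ⊆ B(K)` into `B(H)`. -/
def IsCPop {K H : Type*} [NormedAddCommGroup K] [InnerProductSpace ℂ K]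
    [NormedAddCommGroup H] [InnerProductSpace ℂ H]
    (R : Submodule ℂ (K →L[ℂ] K)) (φ : R →ₗ[ℂ] (H →L[ℂ] H)) : Prop :=
  ∀ (m : ℕ) (x : Fin m → Fin m → R),
    OpMatPos (fun i j => (x i j : K →L[ℂ] K)) →
    OpMatPos (fun i j => φ (x i j))

/-- Purity of a completely positive map `φ : R → B(H)`. -/
def IsPureCPop {K H : Type*} [NormedAddCommGroup K] [InnerProductSpace ℂ K]
    [NormedAddCommGroup H] [InnerProductSpace ℂ H]
    (R : Submodule ℂ (K →L[ℂ] K)) (φ : R →ₗ[ℂ] (H →L[ℂ] H)) : Prop :=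
  ∀ ϑ ω : R →ₗ[ℂ] (H →L[ℂ] H), IsCPop R ϑ → IsCPop R ω → ϑ + ω = φ →
    ∃ s : ℝ, 0 ≤ s ∧ s ≤ 1 ∧ ϑ = (s : ℂ) • φ ∧ ω = ((1 - s : ℝ) : ℂ) • φ

section CPExtensions

variable {K H : Type*} [NormedAddCommGroup K] [InnerProductSpace ℂ K]
  [NormedAddCommGroup H] [InnerProductSpace ℂ H] {R T : Submodule ℂ (K →L[ℂ] K)}

theorem IsCPop.smul_add_smul {ψ₁ ψ₂ : T →ₗ[ℂ] (H →L[ℂ] H)} {a b : ℝ} (ha : 0 ≤ a) (hb : 0 ≤ b)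
    (h₁ : IsCPop T ψ₁) (h₂ : IsCPop T ψ₂) : IsCPop T ((a : ℂ) • ψ₁ + (b : ℂ) • ψ₂) := by
  intro m x hx v
  simp only [LinearMap.add_apply, LinearMap.smul_apply, add_apply, smul_apply, inner_add_left,
    inner_smul_left, Complex.conj_ofReal, Finset.sum_add_distrib, ← Finset.mul_sum]
  exact add_nonneg (mul_nonneg (by exact_mod_cast ha) (h₁ m x hx v))
    (mul_nonneg (by exact_mod_cast hb) (h₂ m x hx v))

theorem IsCPop.comp_inclusion (hRT : R ≤ T) {ψ : T →ₗ[ℂ] (H →L[ℂ] H)} (hψ : IsCPop T ψ) :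
    IsCPop R (ψ ∘ₗ Submodule.inclusion hRT) :=
  fun m x => hψ m (fun i j => Submodule.inclusion hRT (x i j))

theorem comp_inclusion_eq_iff (hRT : R ≤ T) (Φ : T →ₗ[ℂ] (H →L[ℂ] H))
    (φ : R →ₗ[ℂ] (H →L[ℂ] H)) :
    Φ ∘ₗ Submodule.inclusion hRT = φ ↔ ∀ (x : K →L[ℂ] K) (hx : x ∈ R), Φ ⟨x, hRT hx⟩ = φ ⟨x, hx⟩ :=
  LinearMap.ext_iff.trans Subtype.forall

variable (hRT : R ≤ T) (φ : R →ₗ[ℂ] (H →L[ℂ] H))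

def cpExtensions : Set (T →ₗ[ℂ] (H →L[ℂ] H)) :=
  {Φ | IsCPop T Φ ∧ Φ ∘ₗ Submodule.inclusion hRT = φ}

theorem smul_add_smul_mem_cpExtensions {Φ₁ Φ₂ : T →ₗ[ℂ] (H →L[ℂ] H)}
    (h₁ : Φ₁ ∈ cpExtensions hRT φ) (h₂ : Φ₂ ∈ cpExtensions hRT φ) {t : ℝ} (ht₀ : 0 ≤ t)
    (ht₁ : t ≤ 1) : (t : ℂ) • Φ₁ + ((1 - t : ℝ) : ℂ) • Φ₂ ∈ cpExtensions hRT φ := by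
  refine ⟨h₁.1.smul_add_smul ht₀ (sub_nonneg.2 ht₁) h₂.1, ?_⟩
  rw [LinearMap.add_comp, LinearMap.smul_comp, LinearMap.smul_comp, h₁.2, h₂.2, ← add_smul]
  push_cast
  rw [add_sub_cancel, one_smul]

variable {hRT φ} {Φ : T →ₗ[ℂ] (H →L[ℂ] H)} (hΦ : Φ ∈ cpExtensions hRT φ)
  (hext : ∀ Φ₁ ∈ cpExtensions hRT φ, ∀ Φ₂ ∈ cpExtensions hRT φ, ∀ t : ℝ, 0 < t → t < 1 →
    Φ = (t : ℂ) • Φ₁ + ((1 - t : ℝ) : ℂ) • Φ₂ → Φ₁ = Φ ∧ Φ₂ = Φ)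
include hΦ hext

/-- If `Φ = ϑ + ω` and `ϑ` restricts to `s • φ`, then `D = ϑ - s • Φ` vanishes on `R` and
both `Φ + D = (2 - s) ϑ + (1 - s) ω` and `Φ - D = s ϑ + (1 + s) ω` are completely positive,
so they are extensions averaging to `Φ`. -/
theorem eq_smul_of_add_eq_of_extreme {ϑ ω : T →ₗ[ℂ] (H →L[ℂ] H)} (hϑ : IsCPop T ϑ)
    (hω : IsCPop T ω) (hsum : ϑ + ω = Φ) {s : ℝ} (hs₀ : 0 ≤ s) (hs₁ : s ≤ 1)
    (hϑR : ϑ ∘ₗ Submodule.inclusion hRT = (s : ℂ) • φ) : ϑ = (s : ℂ) • Φ := by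
  set D := ϑ - (s : ℂ) • Φ
  have hDR : D ∘ₗ Submodule.inclusion hRT = 0 := by
    rw [LinearMap.sub_comp, LinearMap.smul_comp, hϑR, hΦ.2, sub_self]
  have hplus : Φ + D ∈ cpExtensions hRT φ := by
    refine ⟨?_, by rw [LinearMap.add_comp, hΦ.2, hDR, add_zero]⟩
    have h : Φ + D = ((2 - s : ℝ) : ℂ) • ϑ + ((1 - s : ℝ) : ℂ) • ω := by
      simp only [D]; rw [← hsum]; push_cast; module
    exact h ▸ hϑ.smul_add_smul (by linarith) (by linarith) hω
  have hminus : Φ - D ∈ cpExtensions hRT φ := by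
    refine ⟨?_, by rw [LinearMap.sub_comp, hΦ.2, hDR, sub_zero]⟩
    have h : Φ - D = (s : ℂ) • ϑ + ((1 + s : ℝ) : ℂ) • ω := by
      simp only [D]; rw [← hsum]; push_cast; module
    exact h ▸ hϑ.smul_add_smul hs₀ (by linarith) hω
  have hmid : Φ = ((1 / 2 : ℝ) : ℂ) • (Φ + D) + ((1 - 1 / 2 : ℝ) : ℂ) • (Φ - D) := by
    push_cast; module
  have hD : D = 0 := by
    simpa using (hext _ hplus _ hminus (1 / 2) (by norm_num) (by norm_num) hmid).1
  exact sub_eq_zero.1 hD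

theorem isPureCPop_of_extreme (hφ : IsPureCPop R φ) : IsPureCPop T Φ := by
  intro ϑ ω hϑ hω hsum
  have hsumR : ϑ ∘ₗ Submodule.inclusion hRT + ω ∘ₗ Submodule.inclusion hRT = φ := by
    rw [← LinearMap.add_comp, hsum, hΦ.2]
  obtain ⟨s, hs₀, hs₁, hϑR, hωR⟩ :=
    hφ _ _ (hϑ.comp_inclusion hRT) (hω.comp_inclusion hRT) hsumR
  refine ⟨s, hs₀, hs₁, ?_, ?_⟩
  · exact eq_smul_of_add_eq_of_extreme hΦ hext hϑ hω hsum hs₀ hs₁ hϑR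
  · exact eq_smul_of_add_eq_of_extreme hΦ hext hω hϑ ((add_comm _ _).trans hsum)
      (sub_nonneg.2 hs₁) (by linarith) hωR

end CPExtensions

theorem extreme_points_of_extension_set_are_pure_general
    {K H : Type*} [NormedAddCommGroup K] [InnerProductSpace ℂ K]
    [NormedAddCommGroup H] [InnerProductSpace ℂ H]
    (R T : Submodule ℂ (K →L[ℂ] K)) (hRT : R ≤ T)
    (φ : R →ₗ[ℂ] (H →L[ℂ] H)) (hφpure : IsPureCPop R φ)
    (C : Set (T →ₗ[ℂ] (H →L[ℂ] H)))
    (hC : ∀ Φ, Φ ∈ C ↔ (IsCPop T Φ ∧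
      ∀ (x : K →L[ℂ] K) (hx : x ∈ R), Φ ⟨x, hRT hx⟩ = φ ⟨x, hx⟩)) :
    (∀ Φ₁ ∈ C, ∀ Φ₂ ∈ C, ∀ t : ℝ, 0 ≤ t → t ≤ 1 →
        (t : ℂ) • Φ₁ + ((1 - t : ℝ) : ℂ) • Φ₂ ∈ C) ∧
    (∀ Φ ∈ C, (∀ Φ₁ ∈ C, ∀ Φ₂ ∈ C, ∀ t : ℝ, 0 < t → t < 1 →
        Φ = (t : ℂ) • Φ₁ + ((1 - t : ℝ) : ℂ) • Φ₂ → Φ₁ = Φ ∧ Φ₂ = Φ) →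
      IsPureCPop T Φ) := by
  obtain rfl : C = cpExtensions hRT φ :=
    Set.ext fun Φ => (hC Φ).trans (and_congr_right' (comp_inclusion_eq_iff hRT Φ φ).symm)
  exact ⟨fun _ h₁ _ h₂ _ ht₀ ht₁ => smul_add_smul_mem_cpExtensions hRT φ h₁ h₂ ht₀ ht₁,
    fun _ hΦ hext => isPureCPop_of_extreme hΦ hext hφpure⟩

/-- Let `C` be the set of completely positive extensions to `T` of a pure completely
positive map `φ : R → B(H)`.  Then `C` is convex, and every extreme point of `C` is a
pure completely positive map in `CP(T, B(H))`. -/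
theorem extreme_points_of_extension_set_are_pure
    {K H : Type*} [NormedAddCommGroup K] [InnerProductSpace ℂ K] [CompleteSpace K]
    [NormedAddCommGroup H] [InnerProductSpace ℂ H] [CompleteSpace H]
    (R T : Submodule ℂ (K →L[ℂ] K)) (hRT : R ≤ T)
    (hR1 : (1 : K →L[ℂ] K) ∈ R) (hRstar : ∀ x ∈ R, star x ∈ R)
    (hT1 : (1 : K →L[ℂ] K) ∈ T) (hTstar : ∀ x ∈ T, star x ∈ T)
    (φ : R →ₗ[ℂ] (H →L[ℂ] H)) (hφcp : IsCPop R φ) (hφpure : IsPureCPop R φ)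
    (C : Set (T →ₗ[ℂ] (H →L[ℂ] H)))
    (hC : ∀ Φ, Φ ∈ C ↔ (IsCPop T Φ ∧
      ∀ (x : K →L[ℂ] K) (hx : x ∈ R), Φ ⟨x, hRT hx⟩ = φ ⟨x, hx⟩)) :
    (∀ Φ₁ ∈ C, ∀ Φ₂ ∈ C, ∀ t : ℝ, 0 ≤ t → t ≤ 1 →
        (t : ℂ) • Φ₁ + ((1 - t : ℝ) : ℂ) • Φ₂ ∈ C) ∧
    (∀ Φ ∈ C, (∀ Φ₁ ∈ C, ∀ Φ₂ ∈ C, ∀ t : ℝ, 0 < t → t < 1 →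
        Φ = (t : ℂ) • Φ₁ + ((1 - t : ℝ) : ℂ) • Φ₂ → Φ₁ = Φ ∧ Φ₂ = Φ) →
      IsPureCPop T Φ) :=
  extreme_points_of_extension_set_are_pure_general R T hRT φ hφpure C hC
end

section
/- Fix n ≥ 1 and k ∈ {1, …, 2n}. If Φ : ℂ^{2n} → ℂ is a linear functional that is positive (Φ(x) ≥ 0 whenever every coordinate of x is a nonnegative real), unital (Φ(1,…,1) = 1), and satisfies Φ(z) = z_k (the k-th coordinate of z) for every z ∈ Z_n, then Φ(x) = x_k for every x ∈ ℂ^{2n}. In other words, the k-th coordinate projection π_k : ℂ^{2n} → ℂ is the unique state extension of its restriction to Z_n, so each π_k is a boundary representation of ℓ^∞(2n) for Z_n. -/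
open scoped ComplexOrder

/-- The vector `(α+β₁, α−β₁, …, α+βₙ, α−βₙ) ∈ ℂ^{2n}`, with coordinates indexed by
`Fin n × Fin 2` (the pair `(k, 0)` is the coordinate `α+βₖ` and `(k, 1)` is `α−βₖ`). -/
def zVec (n : ℕ) (α : ℂ) (β : Fin n → ℂ) : Fin n × Fin 2 → ℂ :=
  fun p => if p.2 = 0 then α + β p.1 else α - β p.1

/-- The operator system `Zₙ = { (α+β₁, α−β₁, …, α+βₙ, α−βₙ) } ⊆ ℓ^∞(2n) = ℂ^{2n}`. -/
noncomputable def ZSys (n : ℕ) : Submodule ℂ (Fin n × Fin 2 → ℂ) :=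
  Submodule.span ℂ {x | ∃ α β, x = zVec n α β}

/-! The weights `cᵢ = Φ(eᵢ)` of a state `Φ` on `ℂ^{2n}` are nonnegative and sum to `1`.
The vector `e_k − e_{k'}`, where `k'` is the partner coordinate of `k`, lies in `Zₙ`
(take `α = 0` and `β = ±e_{k.1}`), so `c_k − c_{k'} = 1`, whence `c_k ≥ 1`. This forces
`c_k = 1` and all other weights to vanish, i.e. `Φ = π_k`. -/

namespace LinearMap

variable {ι R : Type*} [CommRing R] [DecidableEq ι]

theorem apply_single_nonneg [PartialOrder R] [IsOrderedRing R] {Φ : (ι → R) →ₗ[R] R}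
    (hpos : ∀ x : ι → R, (∀ i, 0 ≤ x i) → 0 ≤ Φ x) (i : ι) : 0 ≤ Φ (Pi.single i 1) :=
  hpos _ (Pi.single_nonneg.mpr zero_le_one)

variable [Fintype ι]

theorem apply_eq_sum_mul_apply_single (Φ : (ι → R) →ₗ[R] R) (x : ι → R) :
    Φ x = ∑ i, x i * Φ (Pi.single i 1) := by
  conv_lhs => rw [← Finset.univ_sum_single x]
  rw [map_sum]
  refine Finset.sum_congr rfl fun i _ => ?_
  rw [← smul_eq_mul, ← map_smul, ← Pi.single_smul, smul_eq_mul, mul_one]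

theorem sum_apply_single_eq_one {Φ : (ι → R) →ₗ[R] R} (hunital : Φ (fun _ => 1) = 1) :
    ∑ i, Φ (Pi.single i 1) = 1 := by
  simpa [apply_eq_sum_mul_apply_single Φ (fun _ => 1)] using hunital

variable [PartialOrder R] [IsOrderedRing R] {Φ : (ι → R) →ₗ[R] R}

theorem apply_single_eq_of_one_le (hpos : ∀ x : ι → R, (∀ i, 0 ≤ x i) → 0 ≤ Φ x)
    (hunital : Φ (fun _ => 1) = 1) {k : ι} (hk : 1 ≤ Φ (Pi.single k 1)) (i : ι) :
    Φ (Pi.single i 1) = (Pi.single k 1 : ι → R) i := by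
  have hnonneg : ∀ j ∈ Finset.univ.erase k, 0 ≤ Φ (Pi.single j 1) :=
    fun j _ => apply_single_nonneg hpos j
  have hsplit := Finset.add_sum_erase Finset.univ (fun j => Φ (Pi.single j 1))
    (Finset.mem_univ k)
  rw [sum_apply_single_eq_one hunital] at hsplit
  have hrest : ∑ j ∈ Finset.univ.erase k, Φ (Pi.single j 1) = 0 :=
    le_antisymm (by linear_combination hsplit + hk) (Finset.sum_nonneg hnonneg)
  by_cases hik : i = k
  · subst hik
    simpa [hrest] using hsplit
  · rw [Pi.single_eq_of_ne hik]
    exact (Finset.sum_eq_zero_iff_of_nonneg hnonneg).mp hrest i (by simp [hik])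

theorem apply_eq_of_one_le_apply_single (hpos : ∀ x : ι → R, (∀ i, 0 ≤ x i) → 0 ≤ Φ x)
    (hunital : Φ (fun _ => 1) = 1) {k : ι} (hk : 1 ≤ Φ (Pi.single k 1)) (x : ι → R) :
    Φ x = x k := by
  simp [apply_eq_sum_mul_apply_single Φ x, apply_single_eq_of_one_le hpos hunital hk,
    Pi.single_apply]

end LinearMap

theorem single_sub_single_partner_mem_ZSys {n : ℕ} (k : Fin n × Fin 2) :
    Pi.single k 1 - Pi.single (k.1, k.2 + 1) 1 ∈ ZSys n := by
  refine Submodule.subset_span ⟨0, Pi.single k.1 (if k.2 = 0 then 1 else -1), ?_⟩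
  obtain ⟨m, b⟩ := k
  funext ⟨m', b'⟩
  rcases eq_or_ne m' m with rfl | hm
  · fin_cases b <;> fin_cases b' <;> simp [zVec]
  · simp [zVec, hm]

theorem coordinate_projection_unique_state_extension_general (n : ℕ)
    (k : Fin n × Fin 2) (Φ : (Fin n × Fin 2 → ℂ) →ₗ[ℂ] ℂ)
    (hpos : ∀ x : Fin n × Fin 2 → ℂ, (∀ i, 0 ≤ x i) → 0 ≤ Φ x)
    (hunital : Φ (fun _ => 1) = 1)
    (hext : ∀ z ∈ ZSys n, Φ z = z k) :
    ∀ x : Fin n × Fin 2 → ℂ, Φ x = x k := by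
  have hpartner : k ≠ (k.1, k.2 + 1) := by simp [Prod.ext_iff]
  have hdiff : Φ (Pi.single k 1) - Φ (Pi.single (k.1, k.2 + 1) 1) = 1 := by
    simpa [Pi.single_eq_of_ne hpartner] using hext _ (single_sub_single_partner_mem_ZSys k)
  have hk : 1 ≤ Φ (Pi.single k 1) :=
    calc 1 ≤ 1 + Φ (Pi.single (k.1, k.2 + 1) 1) :=
          le_add_of_nonneg_right (LinearMap.apply_single_nonneg hpos _)
      _ = Φ (Pi.single k 1) := by linear_combination -hdiff
  exact LinearMap.apply_eq_of_one_le_apply_single hpos hunital hk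

/-- Each coordinate projection `π_k : ℓ^∞(2n) → ℂ` is the unique state extension of its
restriction to `Zₙ`; that is, every positive unital linear functional on `ℂ^{2n}` that
agrees with the `k`-th coordinate on `Zₙ` is the `k`-th coordinate projection.  Hence
each `π_k` is a boundary representation of `ℓ^∞(2n)` for `Zₙ`. -/
theorem coordinate_projection_unique_state_extension (n : ℕ) (hn : 1 ≤ n)
    (k : Fin n × Fin 2) (Φ : (Fin n × Fin 2 → ℂ) →ₗ[ℂ] ℂ)
    (hpos : ∀ x : Fin n × Fin 2 → ℂ, (∀ i, 0 ≤ x i) → 0 ≤ Φ x)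
    (hunital : Φ (fun _ => 1) = 1)
    (hext : ∀ z ∈ ZSys n, Φ z = z k) :
    ∀ x : Fin n × Fin 2 → ℂ, Φ x = x k :=
  coordinate_projection_unique_state_extension_general n k Φ hpos hunital hext
end

section
/- Fix n ≥ 1 and k ∈ {1, …, n}. Let D_n ⊆ M_{2n}(ℂ) be the C*-algebra of block-diagonal matrices ⊕_{j=1}^n a_j with a_j ∈ M_2(ℂ) (so D_n is *-isomorphic to the direct sum of n copies of M_2(ℂ)), and let π_k : D_n → M_2(ℂ) be the projection onto the k-th 2×2 diagonal block. If Φ : D_n → M_2(ℂ) is a unital completely positive linear map satisfying Φ(x) = π_k(x) for every x ∈ X_n, then Φ = π_k. In other words, π_k is the unique ucp extension of its restriction to X_n, so each π_k is a boundary representation of D_n for X_n. -/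
open scoped ComplexOrder

/-- Complete positivity for a linear map from a matrix operator system `S` into
`M₂(ℂ)`. -/
def IsCPFun {ι : Type} [Fintype ι] (S : Submodule ℂ (Matrix ι ι ℂ))
    (φ : S →ₗ[ℂ] Matrix (Fin 2) (Fin 2) ℂ) : Prop :=
  ∀ (m : ℕ) (x : Fin m → Fin m → S),
    (blockMat fun i j => (x i j : Matrix ι ι ℂ)).PosSemidef →
    (blockMat fun i j => φ (x i j)).PosSemidef

/-- The C*-algebra `Dₙ ⊆ M_{2n}(ℂ)` of block-diagonal matrices `⊕ⱼ aⱼ` with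
`aⱼ ∈ M₂(ℂ)` (as a subspace; it is closed under multiplication and adjoints). -/
noncomputable def DSys (n : ℕ) : Submodule ℂ (Matrix (Fin n × Fin 2) (Fin n × Fin 2) ℂ) where
  carrier := {x | ∀ p q, p.1 ≠ q.1 → x p q = 0}
  add_mem' := fun ha hb p q h => by simp [Matrix.add_apply, ha p q h, hb p q h]
  zero_mem' := fun p q _ => rfl
  smul_mem' := fun c a ha p q h => by simp [Matrix.smul_apply, ha p q h]

theorem one_mem_DSys (n : ℕ) : (1 : Matrix (Fin n × Fin 2) (Fin n × Fin 2) ℂ) ∈ DSys n :=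
  fun _ _ h => Matrix.one_apply_ne fun e => h (congrArg Prod.fst e)

/-- Projection of a `2n × 2n` matrix onto its `k`-th `2 × 2` diagonal block. -/
noncomputable def projBlock (n : ℕ) (k : Fin n) :
    Matrix (Fin n × Fin 2) (Fin n × Fin 2) ℂ →ₗ[ℂ] Matrix (Fin 2) (Fin 2) ℂ where
  toFun x := Matrix.of fun i j => x (k, i) (k, j)
  map_add' _ _ := rfl
  map_smul' _ _ := rfl

/-!
Write `e_{j,pq}` for the matrix units of `Dₙ` and `E_{pq}` for those of `M₂(ℂ)`. The
off-diagonal units `e_{j,01}, e_{j,10}` lie in `Xₙ`, so `Φ(e_{j,pq}) = δ_{jk} E_{pq}` for `p ≠ q`.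
For the diagonal units, positivity gives `Φ(e_{j,pp}) ≥ 0`, and the Schwarz inequality
`Φ(a)* Φ(a) ≤ Φ(a* a)` for `a = e_{k,qp}` gives `Φ(e_{k,pp}) ≥ E_{qp}* E_{qp} = E_{pp}`.
Thus `Φ(e_{j,pp}) ≥ π_k(e_{j,pp})` for all `j, p`, and both sides sum to the identity, so they
are equal. Hence `Φ` and `π_k` agree on all matrix units, which span `Dₙ`.
-/

open Matrix
open scoped MatrixOrder

lemma blockMat_mul {ι : Type} [Fintype ι] {m : ℕ} (x y : Fin m → Fin m → Matrix ι ι ℂ) :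
    blockMat x * blockMat y = blockMat fun i j => ∑ l, x i l * y l j := by
  ext p q
  simp [blockMat, mul_apply, Matrix.sum_apply, Fintype.sum_prod_type]

lemma blockMat_conjTranspose {ι : Type} {m : ℕ} (x : Fin m → Fin m → Matrix ι ι ℂ) :
    (blockMat x)ᴴ = blockMat fun i j => (x j i)ᴴ := rfl

lemma Matrix.PosSemidef.conjTranspose_mul_le_of_blockMat {ι : Type} [Fintype ι] [DecidableEq ι]
    {A B : Matrix ι ι ℂ} (h : (blockMat ![![A, Bᴴ], ![B, 1]]).PosSemidef) : Bᴴ * B ≤ A := by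
  have hblocks : (blockMat ![![A, Bᴴ], ![B, 1]]).submatrix (Sum.elim (0, ·) (1, ·))
      (Sum.elim (0, ·) (1, ·)) = fromBlocks A Bᴴ Bᴴᴴ 1 := by
    ext (i | i) (j | j) <;> simp [blockMat]
  let _ : Invertible (1 : Matrix ι ι ℂ) := invertibleOne
  have := (PosDef.fromBlocks₂₂ A Bᴴ PosDef.one).1 (hblocks ▸ h.submatrix _)
  simpa [le_iff] using this

lemma IsCPFun.posSemidef_map {ι : Type} [Fintype ι] {S : Submodule ℂ (Matrix ι ι ℂ)}
    {φ : S →ₗ[ℂ] Matrix (Fin 2) (Fin 2) ℂ} (hφ : IsCPFun S φ) {s : S}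
    (hs : (s : Matrix ι ι ℂ).PosSemidef) : (φ s).PosSemidef :=
  (hφ 1 (fun _ _ => s) (hs.submatrix Prod.snd)).submatrix ((0 : Fin 1), ·)

lemma IsCPFun.conjTranspose_mul_le_map {ι : Type} [Fintype ι] [DecidableEq ι]
    {S : Submodule ℂ (Matrix ι ι ℂ)} {φ : S →ₗ[ℂ] Matrix (Fin 2) (Fin 2) ℂ} (hφ : IsCPFun S φ)
    {u a b c : S} (hu : (u : Matrix ι ι ℂ) = 1) (hb : (b : Matrix ι ι ℂ) = (a : Matrix ι ι ℂ)ᴴ)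
    (hc : (c : Matrix ι ι ℂ) = (a : Matrix ι ι ℂ)ᴴ * a) (hφu : φ u = 1) (hφb : φ b = (φ a)ᴴ) :
    (φ a)ᴴ * φ a ≤ φ c := by
  set x : Fin 2 → Fin 2 → S := ![![c, b], ![a, u]]
  set y : Fin 2 → Fin 2 → Matrix ι ι ℂ := ![![0, 0], ![a, 1]]
  have hx : (blockMat fun i j => (x i j : Matrix ι ι ℂ)) = (blockMat y)ᴴ * blockMat y := by
    rw [blockMat_conjTranspose, blockMat_mul]
    refine congrArg blockMat (funext₂ fun i j => ?_)
    fin_cases i <;> fin_cases j <;> simp [x, y, hu, hb, hc, Fin.sum_univ_two]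
  have hφx : (blockMat fun i j => φ (x i j)) = blockMat ![![φ c, (φ a)ᴴ], ![φ a, 1]] := by
    refine congrArg blockMat (funext₂ fun i j => ?_)
    fin_cases i <;> fin_cases j <;> simp [x, hφb, hφu]
  exact (hφx ▸ hφ 2 x (hx ▸ posSemidef_conjTranspose_mul_self _)).conjTranspose_mul_le_of_blockMat

@[simp]
lemma projBlock_apply {n : ℕ} (k : Fin n) (x : Matrix (Fin n × Fin 2) (Fin n × Fin 2) ℂ)
    (i l : Fin 2) : projBlock n k x i l = x (k, i) (k, l) :=
  rfl

namespace DSys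

variable {n : ℕ}

def single (j : Fin n) (p q : Fin 2) : DSys n :=
  ⟨Matrix.single (j, p) (j, q) 1, fun _ _ hne =>
    single_apply_of_ne _ _ _ _ _ fun h => hne (by rw [← h.1, ← h.2])⟩

lemma coe_single (j : Fin n) (p q : Fin 2) :
    (single j p q : Matrix (Fin n × Fin 2) (Fin n × Fin 2) ℂ) = Matrix.single (j, p) (j, q) 1 :=
  rfl

lemma single_mem_XSys (j : Fin n) {p q : Fin 2} (hpq : p ≠ q) :
    (single j p q : Matrix (Fin n × Fin 2) (Fin n × Fin 2) ℂ) ∈ XSys n := by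
  refine Submodule.subset_span ⟨0, if p = 0 then Pi.single j 1 else 0,
    if p = 0 then 0 else Pi.single j 1, ?_⟩
  ext ⟨a, i⟩ ⟨b, l⟩
  fin_cases p <;> fin_cases q <;> fin_cases i <;> fin_cases l <;>
    simp_all [coe_single, xMat, Matrix.single_apply, Pi.single_apply] <;> grind

lemma posSemidef_single (j : Fin n) (p : Fin 2) :
    (single j p p : Matrix (Fin n × Fin 2) (Fin n × Fin 2) ℂ).PosSemidef := by
  simpa [coe_single] using posSemidef_conjTranspose_mul_self (Matrix.single (j, p) (j, p) (1 : ℂ))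

lemma projBlock_single (k j : Fin n) (p q : Fin 2) :
    projBlock n k (single j p q) = if j = k then Matrix.single p q 1 else 0 := by
  ext i l
  by_cases hjk : j = k <;> simp [coe_single, Matrix.single_apply, hjk]

lemma sum_single_diag : ∑ a : Fin n × Fin 2, single a.1 a.2 a.2 = ⟨1, one_mem_DSys n⟩ :=
  Subtype.ext (by simp [coe_single, sum_single_one])

lemma span_range_single :
    Submodule.span ℂ (Set.range fun t : Fin n × Fin 2 × Fin 2 => single t.1 t.2.1 t.2.2) = ⊤ := by
  refine Submodule.eq_top_iff'.2 fun x => (Submodule.mem_span_range_iff_exists_fun ℂ).2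
    ⟨fun t => (x : Matrix _ _ ℂ) (t.1, t.2.1) (t.1, t.2.2), Subtype.ext ?_⟩
  ext ⟨a, i⟩ ⟨b, l⟩
  simp only [AddSubmonoidClass.coe_finsetSum, SetLike.val_smul, coe_single, smul_single,
    smul_eq_mul, mul_one, Matrix.sum_apply, single_apply, Prod.mk.injEq]
  by_cases hab : a = b
  · subst hab
    rw [Finset.sum_eq_single (a, i, l)] <;> aesop
  · rw [x.2 (a, i) (b, l) hab]
    exact Finset.sum_eq_zero fun c _ => if_neg fun h => hab (h.1.1.symm.trans h.2.1)

end DSys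

lemma projBlock_single_diag_le {n : ℕ} {k : Fin n}
    {Φ : DSys n →ₗ[ℂ] Matrix (Fin 2) (Fin 2) ℂ} (hΦcp : IsCPFun (DSys n) Φ)
    (hΦ1 : Φ ⟨1, one_mem_DSys n⟩ = 1)
    (hoff : ∀ (j : Fin n) {p q : Fin 2}, p ≠ q →
      Φ (DSys.single j p q) = projBlock n k (DSys.single j p q))
    (j : Fin n) (p : Fin 2) :
    projBlock n k (DSys.single j p p) ≤ Φ (DSys.single j p p) := by
  rw [DSys.projBlock_single]
  split_ifs with hjk
  · subst hjk
    obtain ⟨q, hqp⟩ := exists_ne p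
    have hφ : ∀ {r s : Fin 2}, r ≠ s → Φ (DSys.single j r s) = Matrix.single r s 1 := fun h => by
      rw [hoff j h, DSys.projBlock_single, if_pos rfl]
    simpa [hφ hqp] using hΦcp.conjTranspose_mul_le_map (a := DSys.single j q p)
      (b := DSys.single j p q) rfl (by simp [DSys.coe_single]) (by simp [DSys.coe_single]) hΦ1
      (by simp [hφ hqp, hφ hqp.symm])
  · exact (hΦcp.posSemidef_map (DSys.posSemidef_single j p)).nonneg

theorem block_projection_unique_ucp_extension_general (n : ℕ) (k : Fin n)
    (Φ : DSys n →ₗ[ℂ] Matrix (Fin 2) (Fin 2) ℂ)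
    (hΦcp : IsCPFun (DSys n) Φ)
    (hΦ1 : Φ ⟨1, one_mem_DSys n⟩ = 1)
    (hext : ∀ x : DSys n, (x : Matrix (Fin n × Fin 2) (Fin n × Fin 2) ℂ) ∈ XSys n →
      Φ x = projBlock n k (x : Matrix (Fin n × Fin 2) (Fin n × Fin 2) ℂ)) :
    ∀ x : DSys n, Φ x = projBlock n k (x : Matrix (Fin n × Fin 2) (Fin n × Fin 2) ℂ) := by
  have hoff : ∀ (j : Fin n) {p q : Fin 2}, p ≠ q →
      Φ (DSys.single j p q) = projBlock n k (DSys.single j p q) :=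
    fun j _ _ hpq => hext _ (DSys.single_mem_XSys j hpq)
  have hle : ∀ a : Fin n × Fin 2,
      projBlock n k (DSys.single a.1 a.2 a.2) ≤ Φ (DSys.single a.1 a.2 a.2) :=
    fun a => projBlock_single_diag_le hΦcp hΦ1 hoff a.1 a.2
  have hsum : ∑ a : Fin n × Fin 2, projBlock n k (DSys.single a.1 a.2 a.2)
      = ∑ a : Fin n × Fin 2, Φ (DSys.single a.1 a.2 a.2) := by
    rw [← map_sum, ← map_sum, ← Submodule.coe_sum, DSys.sum_single_diag, hΦ1]
    ext i l
    simp [Matrix.one_apply]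
  have hdiag := (Finset.sum_eq_sum_iff_of_le fun a _ => hle a).1 hsum
  have hunits : Φ = (projBlock n k).comp (DSys n).subtype := by
    refine LinearMap.ext_on_range DSys.span_range_single ?_
    rintro ⟨j, p, q⟩
    rcases eq_or_ne p q with rfl | hpq
    · exact (hdiag (j, p) (Finset.mem_univ _)).symm
    · exact hoff j hpq
  exact LinearMap.congr_fun hunits

/-- Each block projection `π_k : Dₙ → M₂(ℂ)` is the unique ucp extension of its
restriction to `Xₙ`: every unital completely positive map `Φ : Dₙ → M₂(ℂ)` that agrees
with `π_k` on `Xₙ` equals `π_k`.  Hence `π_k` is a boundary representation of `Dₙ`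
for `Xₙ`. -/
theorem block_projection_unique_ucp_extension (n : ℕ) (hn : 1 ≤ n) (k : Fin n)
    (Φ : DSys n →ₗ[ℂ] Matrix (Fin 2) (Fin 2) ℂ)
    (hΦcp : IsCPFun (DSys n) Φ)
    (hΦ1 : Φ ⟨1, one_mem_DSys n⟩ = 1)
    (hext : ∀ x : DSys n, (x : Matrix (Fin n × Fin 2) (Fin n × Fin 2) ℂ) ∈ XSys n →
      Φ x = projBlock n k (x : Matrix (Fin n × Fin 2) (Fin n × Fin 2) ℂ)) :
    ∀ x : DSys n, Φ x = projBlock n k (x : Matrix (Fin n × Fin 2) (Fin n × Fin 2) ℂ) :=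
  block_projection_unique_ucp_extension_general n k Φ hΦcp hΦ1 hext
end

section
/- Let S ⊆ M_N(ℂ) and T ⊆ M_M(ℂ) be (finite-dimensional) matrix operator systems and let φ : S → T be a completely positive linear map. Then: (1) the linear adjoint φ^d : T^d → S^d, defined by φ^d(γ) = γ ∘ φ for γ ∈ T^d, is completely positive with respect to the dual matrix orderings; and (2) φ is pure in CP(S, T) if and only if φ^d is pure in CP(T^d, S^d). -/
open scoped ComplexOrder Matrix

/-- The linear map `x ↦ [γᵢⱼ(x)]` associated with a matrix of linear functionals. -/
def toMatMap {E : Type*} [AddCommGroup E] [Module ℂ E] {m : ℕ}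
    (γ : Fin m → Fin m → Module.Dual ℂ E) : E →ₗ[ℂ] Matrix (Fin m) (Fin m) ℂ where
  toFun x := Matrix.of fun i j => γ i j x
  map_add' x y := by ext i j; simp [Matrix.add_apply]
  map_smul' c x := by ext i j; simp [Matrix.smul_apply]

/-- The dual matrix ordering: a matrix `[γᵢⱼ]` of functionals on a matrix operator
system `S` is positive precisely when `x ↦ [γᵢⱼ(x)]` is completely positive. -/
def DualPos {ι : Type} [Fintype ι] (S : Submodule ℂ (Matrix ι ι ℂ)) {m : ℕ}
    (γ : Fin m → Fin m → Module.Dual ℂ S) : Prop :=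
  ∀ (r : ℕ) (x : Fin r → Fin r → S),
    (blockMat fun a b => (x a b : Matrix ι ι ℂ)).PosSemidef →
    (blockMat fun a b => toMatMap γ (x a b)).PosSemidef

/-- Complete positivity for a linear map between the duals of matrix operator systems,
with respect to the dual matrix orderings. -/
def IsCPDual {ι κ : Type} [Fintype ι] [Fintype κ]
    (S : Submodule ℂ (Matrix ι ι ℂ)) (T : Submodule ℂ (Matrix κ κ ℂ))
    (ψ : Module.Dual ℂ T →ₗ[ℂ] Module.Dual ℂ S) : Prop :=
  ∀ (m : ℕ) (γ : Fin m → Fin m → Module.Dual ℂ T),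
    DualPos T γ → DualPos S fun i j => ψ (γ i j)

/-- Purity in `CP(S, T)`. -/
def IsPureCP {ι κ : Type} [Fintype ι] [Fintype κ]
    (S : Submodule ℂ (Matrix ι ι ℂ)) (T : Submodule ℂ (Matrix κ κ ℂ))
    (φ : S →ₗ[ℂ] T) : Prop :=
  ∀ ϑ ω : S →ₗ[ℂ] T, IsCP S T ϑ → IsCP S T ω → ϑ + ω = φ →
    ∃ s : ℝ, 0 ≤ s ∧ s ≤ 1 ∧ ϑ = (s : ℂ) • φ ∧ ω = ((1 - s : ℝ) : ℂ) • φ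

/-- Purity in `CP(T^d, S^d)`. -/
def IsPureCPDual {ι κ : Type} [Fintype ι] [Fintype κ]
    (S : Submodule ℂ (Matrix ι ι ℂ)) (T : Submodule ℂ (Matrix κ κ ℂ))
    (ψ : Module.Dual ℂ T →ₗ[ℂ] Module.Dual ℂ S) : Prop :=
  ∀ ϑ ω : Module.Dual ℂ T →ₗ[ℂ] Module.Dual ℂ S,
    IsCPDual S T ϑ → IsCPDual S T ω → ϑ + ω = ψ →
    ∃ s : ℝ, 0 ≤ s ∧ s ≤ 1 ∧ ϑ = (s : ℂ) • ψ ∧ ω = ((1 - s : ℝ) : ℂ) • ψ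

/-! In finite dimensions `φ ↦ φ^d` is a linear bijection, so purity transfers once `φ ↦ φ^d`
maps `CP(S, T)` exactly onto `CP(T^d, S^d)`. If `φ` is CP then so is `φ^d`, directly from the
definition of the dual ordering. Conversely, for `v = (vᵢ)ᵢ` the vector functionals
`γᵢⱼ(y) = ⟪vᵢ, y vⱼ⟫` form a positive element of `M_m(T^d)`, because their block matrices are
compressions `Vᴴ Y V`; evaluating the positive matrix `[φ^d(γᵢⱼ)(x_ab)]` against the diagonal
vector `(δ_ai)` gives back `⟪v, [φ(x_ab)] v⟫ ≥ 0`. -/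

open Matrix
open scoped Kronecker

theorem Matrix.posSemidef_of_forall_dotProduct_mulVec_nonneg {n : Type*} [Fintype n]
    {A : Matrix n n ℂ} (h : ∀ v : n → ℂ, 0 ≤ star v ⬝ᵥ A *ᵥ v) : A.PosSemidef := by
  classical
  rw [← Matrix.isPositive_toEuclideanLin_iff, LinearMap.isPositive_iff_complex]
  intro x
  have hinner : inner ℂ (A.toEuclideanLin x) x = star (star x.ofLp ⬝ᵥ A *ᵥ x.ofLp) := by
    rw [← inner_conj_symm, EuclideanSpace.inner_eq_star_dotProduct, dotProduct_comm]
    rfl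
  obtain ⟨hre, him⟩ := Complex.nonneg_iff.mp (h x.ofLp)
  rw [hinner]
  exact ⟨Complex.ext (by simp) (by simp [← him]), by simpa using hre⟩

section BlockMatrix

variable {ι : Type} [Fintype ι] {m : ℕ}

theorem dotProduct_blockMat_mulVec (x : Fin m → Fin m → Matrix ι ι ℂ) (u w : Fin m × ι → ℂ) :
    u ⬝ᵥ blockMat x *ᵥ w = ∑ a, ∑ b, Function.curry u a ⬝ᵥ x a b *ᵥ Function.curry w b := by
  simp only [dotProduct, mulVec, blockMat, of_apply, Fintype.sum_prod_type, Finset.mul_sum,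
    Function.curry_apply]
  exact Finset.sum_congr rfl fun a _ => (Finset.sum_comm).trans
    (Finset.sum_congr rfl fun b _ => Finset.sum_congr rfl fun i _ => rfl)

theorem Matrix.PosSemidef.sum_blockMat_diag_nonneg {x : Fin m → Fin m → Matrix (Fin m) (Fin m) ℂ}
    (hx : (blockMat x).PosSemidef) : 0 ≤ ∑ a, ∑ b, x a b a b := by
  let e : Fin m × Fin m → ℂ := fun p => (1 : Matrix (Fin m) (Fin m) ℂ) p.1 p.2
  have he : star e = e := by ext ⟨a, b⟩; simp [e, one_apply, apply_ite]
  have hrow (a : Fin m) : Function.curry e a = Pi.single a 1 := by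
    ext b; simp [e, one_apply, Pi.single_apply, eq_comm]
  have hdiag := hx.dotProduct_mulVec_nonneg e
  rw [he, dotProduct_blockMat_mulVec] at hdiag
  simpa [hrow, mulVec_single_one] using hdiag

end BlockMatrix

section VectorFunctional

variable {κ : Type} [Fintype κ] (T : Submodule ℂ (Matrix κ κ ℂ))

def vectorFunctional (v w : κ → ℂ) : Module.Dual ℂ T where
  toFun y := star v ⬝ᵥ (y : Matrix κ κ ℂ) *ᵥ w
  map_add' y z := by simp [add_mulVec]
  map_smul' c y := by simp [smul_mulVec]

theorem blockMat_toMatMap_vectorFunctional {m r : ℕ} (v : Fin m → κ → ℂ)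
    (y : Fin r → Fin r → T) :
    blockMat (fun a b => toMatMap (fun i j => vectorFunctional T (v i) (v j)) (y a b)) =
      ((1 : Matrix (Fin r) (Fin r) ℂ) ⊗ₖ (of v)ᵀ)ᴴ * blockMat (fun a b => (y a b : Matrix κ κ ℂ)) *
        ((1 : Matrix (Fin r) (Fin r) ℂ) ⊗ₖ (of v)ᵀ) := by
  ext ⟨a, i⟩ ⟨b, j⟩
  simp [blockMat, toMatMap, vectorFunctional, mul_apply, Fintype.sum_prod_type, one_apply,
    dotProduct, mulVec, Finset.mul_sum, Finset.sum_mul, apply_ite (starRingEnd ℂ), ite_mul]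
  rw [Finset.sum_comm]
  exact Finset.sum_congr rfl fun k _ => Finset.sum_congr rfl fun l _ => by ring

theorem dualPos_vectorFunctional {m : ℕ} (v : Fin m → κ → ℂ) :
    DualPos T fun i j => vectorFunctional T (v i) (v j) := fun _ y hy => by
  rw [blockMat_toMatMap_vectorFunctional]
  exact hy.conjTranspose_mul_mul_same _

end VectorFunctional

theorem isCP_iff_isCPDual_dualMap {ι κ : Type} [Fintype ι] [Fintype κ]
    {S : Submodule ℂ (Matrix ι ι ℂ)} {T : Submodule ℂ (Matrix κ κ ℂ)} {φ : S →ₗ[ℂ] T} :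
    IsCP S T φ ↔ IsCPDual S T φ.dualMap := by
  refine ⟨fun hφ _ _ hγ r x hx => hγ r (fun a b => φ (x a b)) (hφ r x hx), fun h m x hx => ?_⟩
  refine posSemidef_of_forall_dotProduct_mulVec_nonneg fun v => ?_
  have hvec := h m _ (dualPos_vectorFunctional T (Function.curry v)) m x hx
  rw [dotProduct_blockMat_mulVec]
  exact hvec.sum_blockMat_diag_nonneg

section Transpose

variable {R M M' : Type*} [CommRing R] [AddCommGroup M] [Module R M] [AddCommGroup M']
  [Module R M'] [Module.IsReflexive R M] [Module.IsReflexive R M']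

theorem Module.Dual.transpose_bijective :
    Function.Bijective (Module.Dual.transpose (R := R) (M := M) (M' := M')) := by
  refine ⟨fun f g hfg => ?_, fun ψ => ⟨(evalEquiv R M').symm.toLinearMap ∘ₗ ψ.dualMap ∘ₗ
    (evalEquiv R M).toLinearMap, ?_⟩⟩
  · exact (Module.dualMap_dualMap_eq_iff (f := f) (g := g)).mp (congrArg LinearMap.dualMap hfg)
  · ext γ x
    simp [Module.Dual.transpose_apply, apply_evalEquiv_symm_apply]

noncomputable def Module.Dual.transposeEquiv :
    (M →ₗ[R] M') ≃ₗ[R] (Module.Dual R M' →ₗ[R] Module.Dual R M) :=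
  LinearEquiv.ofBijective _ Module.Dual.transpose_bijective

end Transpose

section Purity

variable {V W : Type*} [AddCommGroup V] [Module ℂ V] [AddCommGroup W] [Module ℂ W]

/-- `IsPureCP S T` and `IsPureCPDual S T` are, by definition, `IsPureIn` of the respective
CP predicates. -/
def IsPureIn (C : V → Prop) (x : V) : Prop :=
  ∀ a b, C a → C b → a + b = x →
    ∃ s : ℝ, 0 ≤ s ∧ s ≤ 1 ∧ a = (s : ℂ) • x ∧ b = ((1 - s : ℝ) : ℂ) • x

theorem LinearEquiv.isPureIn_of_isPureIn_map (e : V ≃ₗ[ℂ] W) {P : V → Prop} {Q : W → Prop}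
    (hPQ : ∀ v, Q (e v) ↔ P v) {x : V} (h : IsPureIn Q (e x)) : IsPureIn P x := by
  intro a b ha hb hab
  obtain ⟨s, hs0, hs1, hsa, hsb⟩ :=
    h (e a) (e b) ((hPQ a).2 ha) ((hPQ b).2 hb) (by rw [← hab, map_add])
  exact ⟨s, hs0, hs1, e.injective (by rw [hsa, map_smul]), e.injective (by rw [hsb, map_smul])⟩

theorem LinearEquiv.isPureIn_map_iff (e : V ≃ₗ[ℂ] W) {P : V → Prop} {Q : W → Prop}
    (hPQ : ∀ v, Q (e v) ↔ P v) {x : V} : IsPureIn Q (e x) ↔ IsPureIn P x := by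
  refine ⟨e.isPureIn_of_isPureIn_map hPQ, fun h => e.symm.isPureIn_of_isPureIn_map (Q := P)
    (fun w => by rw [← hPQ, e.apply_symm_apply]) ?_⟩
  rwa [e.symm_apply_apply]

end Purity

theorem dual_of_cp_map_is_cp_and_purity_transfers_general (N M : ℕ)
    (S : Submodule ℂ (Matrix (Fin N) (Fin N) ℂ))
    (T : Submodule ℂ (Matrix (Fin M) (Fin M) ℂ))
    (φ : S →ₗ[ℂ] T) (hφ : IsCP S T φ) :
    IsCPDual S T φ.dualMap ∧ (IsPureCP S T φ ↔ IsPureCPDual S T φ.dualMap) :=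
  ⟨isCP_iff_isCPDual_dualMap.mp hφ,
    (Module.Dual.transposeEquiv.isPureIn_map_iff fun _ => isCP_iff_isCPDual_dualMap.symm).symm⟩

/-- For a completely positive map `φ : S → T` between matrix operator systems, the
linear adjoint `φ^d : T^d → S^d`, `φ^d(γ) = γ ∘ φ`, is completely positive for the dual
matrix orderings, and `φ` is pure in `CP(S, T)` if and only if `φ^d` is pure in
`CP(T^d, S^d)`. -/
theorem dual_of_cp_map_is_cp_and_purity_transfers (N M : ℕ)
    (S : Submodule ℂ (Matrix (Fin N) (Fin N) ℂ))
    (T : Submodule ℂ (Matrix (Fin M) (Fin M) ℂ))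
    (hS1 : (1 : Matrix (Fin N) (Fin N) ℂ) ∈ S) (hSstar : ∀ x ∈ S, xᴴ ∈ S)
    (hT1 : (1 : Matrix (Fin M) (Fin M) ℂ) ∈ T) (hTstar : ∀ x ∈ T, xᴴ ∈ T)
    (φ : S →ₗ[ℂ] T) (hφ : IsCP S T φ) :
    IsCPDual S T φ.dualMap ∧ (IsPureCP S T φ ↔ IsPureCPDual S T φ.dualMap) :=
  dual_of_cp_map_is_cp_and_purity_transfers_general N M S T φ hφ
end
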